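/- Given d₁ = (V₁U₁) · T₁ᵀ · K₁ᵀ, and the transformed data V₂U₂ = C·(V₁U₁ + H)·Sᶜᵀ with H·T₁ᵀ = 0, T₂ᵀ = (Sᶜᵀ)⁻¹·T₁ᵀ·A⁻¹, K₂ᵀ = A·K₁ᵀ·S_I, then d₂ := (V₂U₂)·T₂ᵀ·K₂ᵀ equals C·d₁·S_I. -/
import Mathlib


theorem stmt_9 {L c J I : ℕ}
    (VU₁ H : Matrix (Fin L) (Fin c) ℚ)
    (T₁ T₂ : Matrix (Fin J) (Fin c) ℚ)
    (K₁ K₂ : Matrix (Fin I) (Fin J) ℚ)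
    (d₁ : Matrix (Fin L) (Fin I) ℚ)
    (C : Matrix (Fin L) (Fin L) ℚ) (hC : IsUnit C)
    (A : Matrix (Fin J) (Fin J) ℚ) (hA : IsUnit A)
    (σc : Equiv.Perm (Fin c)) (σI : Equiv.Perm (Fin I))
    (hd : d₁ = VU₁ * T₁.transpose * K₁.transpose)
    (hH : H * T₁.transpose = 0)
    (hT : T₂.transpose = ((Equiv.Perm.permMatrix ℚ σc).transpose)⁻¹ * T₁.transpose * A⁻¹)
    (hK : K₂.transpose = A * K₁.transpose * (Equiv.Perm.permMatrix ℚ σI)) :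
    (C * (VU₁ + H) * (Equiv.Perm.permMatrix ℚ σc).transpose) * T₂.transpose * K₂.transpose
      = C * d₁ * (Equiv.Perm.permMatrix ℚ σI) := by
  have hP : IsUnit ((Equiv.Perm.permMatrix ℚ σc).transpose : Matrix (Fin c) (Fin c) ℚ) := by
    apply (Matrix.isUnit_iff_isUnit_det _).mpr
    simp [Matrix.det_transpose, Matrix.det_permutation]
  rw [hT, hK, hd]
  have h1 : (Equiv.Perm.permMatrix ℚ σc).transpose *
      ((Equiv.Perm.permMatrix ℚ σc).transpose)⁻¹ = 1 := Matrix.mul_nonsing_inv _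
    ((Matrix.isUnit_iff_isUnit_det _).mp hP)
  have h2 : A⁻¹ * A = 1 := Matrix.nonsing_inv_mul _ ((Matrix.isUnit_iff_isUnit_det _).mp hA)
  have h3 : (VU₁ + H) * T₁.transpose = VU₁ * T₁.transpose := by
    rw [Matrix.add_mul, hH, add_zero]
  calc C * (VU₁ + H) * (Equiv.Perm.permMatrix ℚ σc).transpose *
        (((Equiv.Perm.permMatrix ℚ σc).transpose)⁻¹ * T₁.transpose * A⁻¹) *
        (A * K₁.transpose * Equiv.Perm.permMatrix ℚ σI)
      = C * ((VU₁ + H) * (((Equiv.Perm.permMatrix ℚ σc).transpose *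
          ((Equiv.Perm.permMatrix ℚ σc).transpose)⁻¹) * T₁.transpose) * ((A⁻¹ * A) *
          K₁.transpose)) * Equiv.Perm.permMatrix ℚ σI := by
        simp only [Matrix.mul_assoc]
    _ = C * (VU₁ * T₁.transpose * K₁.transpose) * Equiv.Perm.permMatrix ℚ σI := by
        rw [h1, h2, Matrix.one_mul, Matrix.one_mul, ← Matrix.mul_assoc, h3]
        simp only [Matrix.mul_assoc]
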